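/- Let T < 0 be a real number and let n ≥ 62 be an integer. Define c_q = ∫_0^∞ (1+(t−T)²)^{(5+2q−n)/2} dt for q = 0, 1, 2, and set a₀ = ((n+3)c₁ / (2(n−7)c₀)) · ( 3 + √( 9 − 8((n+7)(n−7)/((n+3)(n−9))) · c₀c₂/c₁² ) ). Then the quantity under the square root is positive, and c₀ a₀² − (2(n+3)/(n−7)) c₁ a₀ + ((n+3)(n+7)/((n−7)(n−9))) c₂ > 0. (This quantity is, up to the positive factor (n−1)(n+1)/(n−5), the value I(1) of the auxiliary function I at s = 1.) -/

import Mathlib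

/-!
Write `J(r) = ∫₀^∞ (1 + (t - T)²)^(-r) dt`, so that `c₂, c₁, c₀ = J(r), J(r+1), J(r+2)` with
`r = (n - 9)/2`. Integrating `d/dt [(t - T)(1 + (t - T)²)^(-r)]` gives the recurrence
`(2r - 1) J(r) = 2r J(r+1) - T (1 + T²)^(-r)`, and for `T ≤ 0` the weight satisfies
`1 + (t - T)² ≥ 1 + T²` on `t > 0`, so `(1 + T²) J(r+1) ≤ J(r)`. Three consecutive instances of
the recurrence together with this inequality force
`8 (r+1)(r+8) J(r) J(r+2) < 9 r (r+6) J(r+1)²` once `r ≥ 53/2`, which is the positivity of the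
radicand. Finally, if `s ≥ 0` and `s² = 9 - 8xk/b²`, the quadratic `x a² - 2b a + k` takes the
value `b² (s+1)(s+3) / (8x) > 0` at `a = b (3 + s) / (2x)`.
-/

open MeasureTheory Set Filter Real Topology

/-- `c q = tailIntegral T ((n - 5 - 2q) / 2)`. -/
noncomputable def tailIntegral (T r : ℝ) : ℝ := ∫ t in Ioi 0, (1 + (t - T) ^ 2) ^ (-r)

section

variable {r : ℝ}

theorem integrable_one_add_sq_sub_rpow_neg (T : ℝ) (hr : 1 / 2 < r) :
    Integrable fun t : ℝ ↦ (1 + (t - T) ^ 2) ^ (-r) := by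
  have h := (integrable_rpow_neg_one_add_norm_sq (E := ℝ) (μ := volume) (r := 2 * r)
    (by simp; linarith)).comp_sub_right T
  simpa [Real.norm_eq_abs, sq_abs, neg_div] using h

theorem tailIntegral_pos (T : ℝ) (hr : 1 / 2 < r) : 0 < tailIntegral T r := by
  have hpos (t : ℝ) : 0 < (1 + (t - T) ^ 2) ^ (-r) := by positivity
  rw [tailIntegral, setIntegral_pos_iff_support_of_nonneg_ae
    (.of_forall fun t ↦ (hpos t).le) (integrable_one_add_sq_sub_rpow_neg T hr).integrableOn,
    Function.support_eq_univ fun t ↦ (hpos t).ne', univ_inter, volume_Ioi]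
  exact ENNReal.zero_lt_top

theorem hasDerivAt_mul_one_add_sq_rpow_neg (T r x : ℝ) :
    HasDerivAt (fun t ↦ (t - T) * (1 + (t - T) ^ 2) ^ (-r))
      ((1 - 2 * r) * (1 + (x - T) ^ 2) ^ (-r) + 2 * r * (1 + (x - T) ^ 2) ^ (-(r + 1))) x := by
  have hb : 0 < 1 + (x - T) ^ 2 := by positivity
  have hsub : HasDerivAt (fun t ↦ t - T) 1 x := (hasDerivAt_id x).sub_const T
  have hbase : HasDerivAt (fun t ↦ 1 + (t - T) ^ 2) (2 * (x - T)) x := by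
    simpa using (hsub.pow 2).const_add 1
  refine (hsub.mul (hbase.rpow_const (p := -r) (.inl hb.ne'))).congr_deriv ?_
  rw [show -r - 1 = -(r + 1) by ring, show (-r) = -(r + 1) + 1 by ring,
    rpow_add_one hb.ne']
  ring

theorem tendsto_mul_one_add_sq_rpow_neg (T : ℝ) (hr : 1 / 2 < r) :
    Tendsto (fun t ↦ (t - T) * (1 + (t - T) ^ 2) ^ (-r)) atTop (𝓝 0) := by
  suffices h : Tendsto (fun u : ℝ ↦ u * (1 + u ^ 2) ^ (-r)) atTop (𝓝 0) from
    h.comp (tendsto_atTop_add_const_right atTop (-T) tendsto_id)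
  refine squeeze_zero' ?_ ?_ (tendsto_rpow_neg_atTop (by linarith : 0 < 2 * r - 1))
  · filter_upwards [eventually_ge_atTop 0] with u hu
    positivity
  · filter_upwards [eventually_gt_atTop 0] with u hu
    calc u * (1 + u ^ 2) ^ (-r) ≤ u * (u ^ 2) ^ (-r) := by
          exact mul_le_mul_of_nonneg_left
            (rpow_le_rpow_of_nonpos (by positivity) (by linarith) (by linarith)) hu.le
      _ = u ^ (-(2 * r - 1)) := by
          rw [← rpow_natCast, ← rpow_mul hu.le,
            show -(2 * r - 1) = (2 : ℕ) * -r + 1 by push_cast; ring, rpow_add_one hu.ne']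
          ring

theorem tailIntegral_recurrence (T : ℝ) (hr : 1 / 2 < r) :
    (2 * r - 1) * tailIntegral T r
      = 2 * r * tailIntegral T (r + 1) - T * (1 + T ^ 2) ^ (-r) := by
  have hint := (integrable_one_add_sq_sub_rpow_neg T hr).integrableOn (s := Ioi 0)
  have hint' := (integrable_one_add_sq_sub_rpow_neg T (r := r + 1) (by linarith)).integrableOn
    (s := Ioi 0)
  have hFTC := integral_Ioi_of_hasDerivAt_of_tendsto'
    (fun x _ ↦ hasDerivAt_mul_one_add_sq_rpow_neg T r x)
    ((hint.const_mul _).add (hint'.const_mul _)) (tendsto_mul_one_add_sq_rpow_neg T hr)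
  rw [integral_add (hint.const_mul _) (hint'.const_mul _), integral_const_mul,
    integral_const_mul] at hFTC
  simp only [zero_sub, neg_sq] at hFTC
  rw [tailIntegral, tailIntegral]
  linarith

theorem one_add_sq_mul_tailIntegral_add_one_le {T : ℝ} (hT : T ≤ 0) (hr : 1 / 2 < r) :
    (1 + T ^ 2) * tailIntegral T (r + 1) ≤ tailIntegral T r := by
  rw [tailIntegral, tailIntegral, ← integral_const_mul]
  refine setIntegral_mono_on
    ((integrable_one_add_sq_sub_rpow_neg T (by linarith)).integrableOn.const_mul _)
    (integrable_one_add_sq_sub_rpow_neg T hr).integrableOn measurableSet_Ioi fun t ht ↦ ?_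
  have hb : 0 < 1 + (t - T) ^ 2 := by positivity
  calc (1 + T ^ 2) * (1 + (t - T) ^ 2) ^ (-(r + 1))
      ≤ (1 + (t - T) ^ 2) * (1 + (t - T) ^ 2) ^ (-(r + 1)) := by
        refine mul_le_mul_of_nonneg_right ?_ (by positivity)
        nlinarith [mem_Ioi.mp ht]
    _ = (1 + (t - T) ^ 2) ^ (-r) := by
        rw [show -r = -(r + 1) + 1 by ring, rpow_add_one hb.ne']
        ring

end

theorem mul_lt_sq_of_recurrence {r w E J₀ J₁ J₂ : ℝ} (hr : 53 / 2 ≤ r) (hJ₁ : J₁ ≠ 0)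
    (hE : 0 ≤ E) (h₀ : (2 * r - 1) * J₀ = 2 * r * J₁ + w * E)
    (h₁ : (2 * r + 1) * J₁ = (2 * r + 2) * J₂ + E)
    (h₂ : ((2 * r + 3) * w - (2 * r + 4)) * J₂ ≤ E) :
    8 * (r + 1) * (r + 8) * (J₀ * J₂) < 9 * r * (r + 6) * J₁ ^ 2 := by
  have hV : 0 < 4 * r ^ 4 - 76 * r ^ 3 - 427 * r ^ 2 - 490 * r - 64 := by
    obtain ⟨u, hu, rfl⟩ : ∃ u, 0 ≤ u ∧ r = u + 53 / 2 := ⟨r - 53 / 2, by linarith, by ring⟩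
    have : 4 * (u + 53 / 2) ^ 4 - 76 * (u + 53 / 2) ^ 3 - 427 * (u + 53 / 2) ^ 2
        - 490 * (u + 53 / 2) - 64
        = 4 * u ^ 4 + 348 * u ^ 3 + 10385 * u ^ 2 + 114520 * u + 245379 := by ring
    rw [this]
    positivity
  have hslack : 0 ≤ (E - ((2 * r + 3) * w - (2 * r + 4)) * J₂) * E :=
    mul_nonneg (by linarith) hE
  -- Each term on the right is nonnegative, and the middle one is positive.
  have key : (2 * r + 3) * (2 * r - 1)
        * (9 * r * (r + 6) * J₁ ^ 2 - 8 * (r + 1) * (r + 8) * (J₀ * J₂))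
      = 8 * (r + 8) * (2 * (r + 1) * J₂ - r * J₁) ^ 2
        + (4 * r ^ 4 - 76 * r ^ 3 - 427 * r ^ 2 - 490 * r - 64) * J₁ ^ 2
        + 8 * (r + 1) * (r + 8) * ((E - ((2 * r + 3) * w - (2 * r + 4)) * J₂) * E) := by
    linear_combination (-8 * (r + 8) * (r + 1) * (2 * r + 3) * J₂) * h₀
      + (8 * (r + 8) * (r + 1) * (E + 2 * J₂ + (2 * r + 1) * J₁)) * h₁
  rw [← sub_pos, ← mul_pos_iff_of_pos_left
    (mul_pos (by linarith : 0 < 2 * r + 3) (by linarith : 0 < 2 * r - 1)), key]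
  positivity

theorem tailIntegral_mul_lt_sq {T r : ℝ} (hT : T ≤ 0) (hr : 53 / 2 ≤ r) :
    8 * (r + 1) * (r + 8) * (tailIntegral T r * tailIntegral T (r + 2))
      < 9 * r * (r + 6) * tailIntegral T (r + 1) ^ 2 := by
  have e₀ := tailIntegral_recurrence T (r := r) (by linarith)
  have e₁ := tailIntegral_recurrence T (r := r + 1) (by linarith)
  have e₂ := tailIntegral_recurrence T (r := r + 2) (by linarith)
  have d := one_add_sq_mul_tailIntegral_add_one_le hT (r := r + 2) (by linarith)
  rw [show r + 1 + 1 = r + 2 by ring] at e₁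
  rw [show r + 2 + 1 = r + 3 by ring] at e₂ d
  set w := 1 + T ^ 2
  have hw0 : w ≠ 0 := by positivity
  have hpow (s : ℝ) : w ^ (-s) = w * w ^ (-(s + 1)) := by
    rw [show -s = -(s + 1) + 1 by ring, rpow_add_one hw0]; ring
  refine mul_lt_sq_of_recurrence (w := w) (E := -T * w ^ (-(r + 1))) hr
    (tailIntegral_pos T (by linarith)).ne' (mul_nonneg (by linarith) (by positivity))
    ?_ ?_ ?_
  · rw [e₀, hpow r]; ring
  · linear_combination e₁
  · have hE : -T * w ^ (-(r + 1))
        = w * ((2 * r + 3) * tailIntegral T (r + 2) - (2 * r + 4) * tailIntegral T (r + 3)) := by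
      rw [hpow (r + 1), show r + 1 + 1 = r + 2 by ring]
      linear_combination -w * e₂
    rw [hE]
    nlinarith [mul_le_mul_of_nonneg_left d (by linarith : (0 : ℝ) ≤ 2 * r + 4)]

theorem quadratic_pos_at_three_add_sqrt {x y z β ρ : ℝ} (hx : 0 < x) (hβ : β ≠ 0) (hy : y ≠ 0)
    (hD : 0 ≤ 9 - 8 * ρ * (x * z / y ^ 2)) :
    0 < x * (β * y / (2 * x) * (3 + √(9 - 8 * ρ * (x * z / y ^ 2)))) ^ 2
      - 2 * β * y * (β * y / (2 * x) * (3 + √(9 - 8 * ρ * (x * z / y ^ 2))))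
      + ρ * β ^ 2 * z := by
  set s := √(9 - 8 * ρ * (x * z / y ^ 2))
  have hs : y ^ 2 * s ^ 2 = 9 * y ^ 2 - 8 * ρ * x * z := by
    rw [Real.sq_sqrt hD]; field_simp
  have hs0 : 0 ≤ s := Real.sqrt_nonneg _
  have : x * (β * y / (2 * x) * (3 + s)) ^ 2 - 2 * β * y * (β * y / (2 * x) * (3 + s))
      + ρ * β ^ 2 * z = (β * y) ^ 2 * ((s + 1) * (s + 3)) / (8 * x) := by
    field_simp
    linear_combination 4 * hs
  rw [this]
  have : 0 < (s + 1) * (s + 3) := by positivity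
  positivity

theorem nine_sub_mul_div_mul_div_pos {A B x y z : ℝ} (hB : 0 < B) (hy : y ≠ 0)
    (h : 8 * A * (x * z) < 9 * B * y ^ 2) : 0 < 9 - 8 * (A / B) * (x * z / y ^ 2) := by
  rw [sub_pos, show 8 * (A / B) * (x * z / y ^ 2) = 8 * A * (x * z) / (B * y ^ 2) by field_simp,
    div_lt_iff₀ (by positivity)]
  linarith

/-- For `T < 0`, `n ≥ 62` and the explicit choice of `a₀`, the
quantity under the square root is positive, and
`c₀a₀² − (2(n+3)/(n−7))c₁a₀ + ((n+3)(n+7)/((n−7)(n−9)))c₂ > 0`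
(which is `I(1)` up to the positive factor `(n−1)(n+1)/(n−5)`). -/
theorem I_one_positive (T : ℝ) (hT : T < 0) (n : ℕ) (hn : 62 ≤ n)
    (c : ℕ → ℝ)
    (hc : ∀ m : ℕ, c m
      = ∫ t in Set.Ioi (0 : ℝ), (1 + (t - T) ^ 2) ^ ((5 + 2 * (m : ℝ) - (n : ℝ)) / 2))
    (a₀ : ℝ)
    (ha₀ : a₀ = (((n : ℝ) + 3) * c 1 / (2 * ((n : ℝ) - 7) * c 0))
      * (3 + Real.sqrt (9 - 8 * (((n : ℝ) + 7) * ((n : ℝ) - 7)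
          / (((n : ℝ) + 3) * ((n : ℝ) - 9))) * (c 0 * c 2 / c 1 ^ 2)))) :
    0 < 9 - 8 * (((n : ℝ) + 7) * ((n : ℝ) - 7) / (((n : ℝ) + 3) * ((n : ℝ) - 9)))
        * (c 0 * c 2 / c 1 ^ 2) ∧
    0 < c 0 * a₀ ^ 2 - (2 * ((n : ℝ) + 3) / ((n : ℝ) - 7)) * c 1 * a₀
        + (((n : ℝ) + 3) * ((n : ℝ) + 7) / (((n : ℝ) - 7) * ((n : ℝ) - 9))) * c 2 := by
  obtain ⟨r, hnr⟩ : ∃ r : ℝ, (n : ℝ) = 2 * r + 9 := ⟨(n - 9) / 2, by ring⟩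
  have hr : 53 / 2 ≤ r := by linarith [show (62 : ℝ) ≤ n by exact_mod_cast hn]
  have hcJ (m : ℕ) (s : ℝ) (hs : s = r + 2 - m) : c m = tailIntegral T s := by
    rw [hc, tailIntegral, hs, hnr]
    congr 1; ext t; congr 1; ring
  have hc₀ := hcJ 0 (r + 2) (by simp)
  have hc₁ := hcJ 1 (r + 1) (by push_cast; ring)
  have hc₂ := hcJ 2 r (by push_cast; ring)
  have hc₀pos : 0 < c 0 := hc₀ ▸ tailIntegral_pos T (by linarith)
  have hc₁pos : 0 < c 1 := hc₁ ▸ tailIntegral_pos T (by linarith)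
  have key := tailIntegral_mul_lt_sq hT.le hr
  rw [← hc₀, ← hc₁, ← hc₂] at key
  have hD : 0 < 9 - 8 * (((n : ℝ) + 7) * ((n : ℝ) - 7) / (((n : ℝ) + 3) * ((n : ℝ) - 9)))
      * (c 0 * c 2 / c 1 ^ 2) :=
    nine_sub_mul_div_mul_div_pos (by rw [hnr]; nlinarith) hc₁pos.ne' (by rw [hnr]; linarith)
  refine ⟨hD, ?_⟩
  have hn7 : (0 : ℝ) < n - 7 := by linarith
  have hβ : ((n : ℝ) + 3) * c 1 / (2 * ((n : ℝ) - 7) * c 0)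
      = ((n + 3) / (n - 7)) * c 1 / (2 * c 0) := by field_simp
  have hγ : ((n : ℝ) + 3) * ((n : ℝ) + 7) / (((n : ℝ) - 7) * ((n : ℝ) - 9))
      = ((n + 7) * (n - 7) / ((n + 3) * (n - 9))) * ((n + 3) / (n - 7)) ^ 2 := by
    rw [hnr] at hn7 ⊢; field_simp
  rw [ha₀, hβ, hγ, mul_div_assoc 2]
  exact quadratic_pos_at_three_add_sqrt hc₀pos (by positivity) hc₁pos.ne' hD.le
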